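/- arXiv:2208.06012 — 2 statements merged into one kernel-verified Lean document; each statement's English description precedes it below -/
import Mathlib

section
/- Let a, b, α, β, q, r, δ, k₁, k₂, J_e be positive real numbers and let c, γ, u_e ∈ ℝ. Set C₁ = (β² + 5)/b. Then there exists a constant C₃ > 0, depending only on these parameters, such that for all real numbers u, v, w, ρ: 2·[ C₁·(a·u³ − b·u⁴ + u·v − u·w + J_e·u − k₁·(c + γρ + δρ²)·u²) + (α·v − β·u²·v − v²) + (q·(u − u_e)·w − r·w²) + (u·ρ − k₂·ρ²) ] + u⁴ + (1/2)v² + (r/2)w² + k₂·ρ² ≤ C₃. -/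
private lemma quartic_absorb (K u : ℝ) : K * u ^ 2 ≤ 8 * u ^ 4 + K ^ 2 / 32 := by
  nlinarith [sq_nonneg (K - 16 * u ^ 2), sq_nonneg u, sq_nonneg (u ^ 2)]

set_option maxHeartbeats 1600000 in
/-- Core pointwise dissipativity estimate for the diffusive Hindmarsh-Rose
system with memristor: with C₁ = (β² + 5)/b there exists C₃ > 0 such that
the grouped integrand satisfies the stated bound for all u, v, w, ρ. -/
theorem pointwise_dissipativity
    (a b α β q r δ k₁ k₂ Je : ℝ)
    (ha : 0 < a) (hb : 0 < b) (hα : 0 < α) (hβ : 0 < β) (hq : 0 < q)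
    (hr : 0 < r) (hδ : 0 < δ) (hk₁ : 0 < k₁) (hk₂ : 0 < k₂) (hJe : 0 < Je)
    (c γ ue : ℝ) (C₁ : ℝ) (hC₁ : C₁ = (β ^ 2 + 5) / b) :
    ∃ C₃ : ℝ, 0 < C₃ ∧ ∀ u v w ρ : ℝ,
      2 * (C₁ * (a * u ^ 3 - b * u ^ 4 + u * v - u * w + Je * u
              - k₁ * (c + γ * ρ + δ * ρ ^ 2) * u ^ 2)
          + (α * v - β * u ^ 2 * v - v ^ 2)
          + (q * (u - ue) * w - r * w ^ 2)
          + (u * ρ - k₂ * ρ ^ 2))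
        + u ^ 4 + (1 / 2) * v ^ 2 + (r / 2) * w ^ 2 + k₂ * ρ ^ 2 ≤ C₃ := by
  have hC₁pos : 0 < C₁ := by rw [hC₁]; positivity
  have hC1b : C₁ * b = β ^ 2 + 5 := by
    rw [hC₁]; field_simp
  refine ⟨(C₁ ^ 2 * a ^ 2 + 2 * C₁ ^ 2 + 2 * C₁ ^ 2 / r + 1
      + C₁ * k₁ * (c ^ 2 + 1) + C₁ * k₁ * γ ^ 2 / δ + 2 * q ^ 2 / r + 1 / k₂) ^ 2 / 32
      + (C₁ ^ 2 * Je ^ 2 + 2 * α ^ 2 + 2 * q ^ 2 * ue ^ 2 / r) + 1, by positivity, ?_⟩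
  intro u v w ρ
  have hCb4 : 2 * (C₁ * b) * u ^ 4 = 2 * (β ^ 2 + 5) * u ^ 4 := by rw [hC1b]
  have h1 : 2 * C₁ * a * u ^ 3 ≤ u ^ 4 + C₁ ^ 2 * a ^ 2 * u ^ 2 := by
    nlinarith [sq_nonneg (u ^ 2 - C₁ * a * u)]
  have h2 : 2 * C₁ * (u * v) ≤ 2 * C₁ ^ 2 * u ^ 2 + v ^ 2 / 2 := by
    nlinarith [sq_nonneg (2 * C₁ * u - v)]
  have h3 : -(2 * C₁ * (u * w)) ≤ 2 * C₁ ^ 2 / r * u ^ 2 + r / 2 * w ^ 2 := by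
    have e : 2 * C₁ ^ 2 / r * u ^ 2 + r / 2 * w ^ 2 + 2 * C₁ * (u * w)
        = (2 * C₁ * u + r * w) ^ 2 / (2 * r) := by
      field_simp; ring
    have hp : 0 ≤ (2 * C₁ * u + r * w) ^ 2 / (2 * r) := by positivity
    linarith
  have h4 : 2 * C₁ * Je * u ≤ u ^ 2 + C₁ ^ 2 * Je ^ 2 := by
    nlinarith [sq_nonneg (u - C₁ * Je)]
  have h5 : -(2 * C₁ * k₁ * c * u ^ 2) ≤ C₁ * k₁ * c ^ 2 * u ^ 2 + C₁ * k₁ * u ^ 2 := by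
    nlinarith [mul_nonneg (mul_nonneg (mul_nonneg hC₁pos.le hk₁.le)
      (sq_nonneg (c + 1))) (sq_nonneg u)]
  have hsc : -(2 * γ * ρ) ≤ δ * ρ ^ 2 + γ ^ 2 / δ := by
    have e : δ * ρ ^ 2 + γ ^ 2 / δ + 2 * γ * ρ = (δ * ρ + γ) ^ 2 / δ := by
      field_simp; ring
    have hp : 0 ≤ (δ * ρ + γ) ^ 2 / δ := by positivity
    linarith
  have h6 := mul_le_mul_of_nonneg_right hsc
    (show (0:ℝ) ≤ C₁ * k₁ * u ^ 2 by positivity)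
  have h7 : 0 ≤ C₁ * k₁ * δ * (ρ ^ 2 * u ^ 2) := by positivity
  have hαv : 2 * α * v ≤ 2 * α ^ 2 + v ^ 2 / 2 := by
    nlinarith [sq_nonneg (v - 2 * α)]
  have h8 : -(2 * β * (u ^ 2 * v)) ≤ 2 * β ^ 2 * u ^ 4 + v ^ 2 / 2 := by
    nlinarith [sq_nonneg (2 * β * u ^ 2 + v)]
  have h9 : 2 * q * (u * w) ≤ 2 * q ^ 2 / r * u ^ 2 + r / 2 * w ^ 2 := by
    have e : 2 * q ^ 2 / r * u ^ 2 + r / 2 * w ^ 2 - 2 * q * (u * w)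
        = (2 * q * u - r * w) ^ 2 / (2 * r) := by
      field_simp; ring
    have hp : 0 ≤ (2 * q * u - r * w) ^ 2 / (2 * r) := by positivity
    linarith
  have h10 : -(2 * q * ue * w) ≤ 2 * q ^ 2 * ue ^ 2 / r + r / 2 * w ^ 2 := by
    have e : 2 * q ^ 2 * ue ^ 2 / r + r / 2 * w ^ 2 + 2 * q * ue * w
        = (2 * q * ue + r * w) ^ 2 / (2 * r) := by
      field_simp; ring
    have hp : 0 ≤ (2 * q * ue + r * w) ^ 2 / (2 * r) := by positivity
    linarith
  have h11 : 2 * (u * ρ) ≤ 1 / k₂ * u ^ 2 + k₂ * ρ ^ 2 := by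
    have e : 1 / k₂ * u ^ 2 + k₂ * ρ ^ 2 - 2 * (u * ρ) = (u - k₂ * ρ) ^ 2 / k₂ := by
      field_simp; ring
    have hp : 0 ≤ (u - k₂ * ρ) ^ 2 / k₂ := by positivity
    linarith
  have hK := quartic_absorb (C₁ ^ 2 * a ^ 2 + 2 * C₁ ^ 2 + 2 * C₁ ^ 2 / r + 1
      + C₁ * k₁ * (c ^ 2 + 1) + C₁ * k₁ * γ ^ 2 / δ + 2 * q ^ 2 / r + 1 / k₂) u
  ring_nf at h1 h2 h3 h4 h5 h6 h7 hαv h8 h9 h10 h11 hK hCb4 ⊢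
  linarith
end

section
/- Let T ∈ ℝ, C ≥ 0, Q ≥ 0. Let y : [T, ∞) → ℝ be differentiable and h : [T, ∞) → ℝ be continuous with h(s) ≥ 0, y′(s) + h(s) ≤ C, and 0 ≤ y(s) ≤ Q for all s ≥ T. Then for all t ≥ T, ∫_T^t e^{−(t−s)}·h(s) ds ≤ 2Q + C. -/
/-!
Since `y ≤ Q`, the hypothesis gives `h + y' + y ≤ C + Q`, i.e. `e^{s-t} h(s)` is bounded by the
derivative of `g(s) = e^{s-t} (C + Q - y(s))`. Hence `∫_T^t e^{s-t} h ≤ g(t) - g(T) ≤ C + Q`,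
using `y(t) ≥ 0` and `y(T) ≤ Q ≤ C + Q`. Comparing with a derivative only needs `y` to be
differentiable, not `y'` to be integrable.
-/

open Real Set MeasureTheory

theorem integral_exp_mul_le_of_add_deriv_add_le {a b K : ℝ} {y y' h : ℝ → ℝ} (hab : a ≤ b)
    (hy_cont : ContinuousOn y (Icc a b)) (hy : ∀ x ∈ Ioo a b, HasDerivAt y (y' x) x)
    (hh : IntegrableOn h (Icc a b)) (hle : ∀ x ∈ Ioo a b, h x + y' x + y x ≤ K) :
    ∫ x in a..b, exp (-(b - x)) * h x ≤ (K - y b) - exp (-(b - a)) * (K - y a) := by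
  have hexp : ∀ x, HasDerivAt (fun x => exp (-(b - x))) (exp (-(b - x))) x := fun x => by
    simpa using ((hasDerivAt_id x).const_sub b).neg.exp
  have hexp_cont : Continuous fun x => exp (-(b - x)) := by fun_prop
  have key := intervalIntegral.integral_le_sub_of_hasDeriv_right_of_le hab
    (g := fun x => exp (-(b - x)) * (K - y x))
    (g' := fun x => exp (-(b - x)) * (K - y x) + exp (-(b - x)) * -y' x)
    (φ := fun x => exp (-(b - x)) * h x)
    (hexp_cont.continuousOn.mul (continuousOn_const.sub hy_cont))
    (fun x hx => ((hexp x).mul ((hy x hx).const_sub K)).hasDerivWithinAt)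
    (hh.continuousOn_mul hexp_cont.continuousOn isCompact_Icc)
    (fun x hx => by
      rw [← mul_add]
      exact mul_le_mul_of_nonneg_left (by linarith [hle x hx]) (exp_pos _).le)
  simpa using key

theorem exp_weighted_dissipation_bound_general (T C Q : ℝ) (hC : 0 ≤ C)
    (y h : ℝ → ℝ)
    (hy : ∀ s ≥ T, DifferentiableAt ℝ y s)
    (hh : ContinuousOn h (Set.Ici T))
    (hineq : ∀ s ≥ T, deriv y s + h s ≤ C)
    (hbd : ∀ s ≥ T, 0 ≤ y s ∧ y s ≤ Q) :
    ∀ t ≥ T, ∫ s in T..t, Real.exp (-(t - s)) * h s ≤ 2 * Q + C := by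
  intro t ht
  have hdissip : ∀ s ∈ Ioo T t, h s + deriv y s + y s ≤ C + Q := fun s hs => by
    linarith [hineq s hs.1.le, (hbd s hs.1.le).2]
  have hint := integral_exp_mul_le_of_add_deriv_add_le ht
    (fun s hs => (hy s hs.1).continuousAt.continuousWithinAt)
    (fun s hs => (hy s hs.1.le).hasDerivAt)
    ((hh.mono Icc_subset_Ici_self).integrableOn_compact isCompact_Icc) hdissip
  obtain ⟨hyT_nonneg, hyT_le⟩ := hbd T le_rfl
  have hyt := (hbd t ht).1
  have hweight : 0 ≤ exp (-(t - T)) * (C + Q - y T) :=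
    mul_nonneg (exp_pos _).le (by linarith)
  linarith

/-- Exponentially weighted integration-by-parts inequality: if h ≥ 0 is
continuous, y is differentiable with y′ + h ≤ C and 0 ≤ y ≤ Q on [T, ∞),
then ∫_T^t e^{−(t−s)} h(s) ds ≤ 2Q + C for all t ≥ T. -/
theorem exp_weighted_dissipation_bound (T C Q : ℝ) (hC : 0 ≤ C) (hQ : 0 ≤ Q)
    (y h : ℝ → ℝ)
    (hy : ∀ s ≥ T, DifferentiableAt ℝ y s)
    (hh : ContinuousOn h (Set.Ici T))
    (hpos : ∀ s ≥ T, 0 ≤ h s)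
    (hineq : ∀ s ≥ T, deriv y s + h s ≤ C)
    (hbd : ∀ s ≥ T, 0 ≤ y s ∧ y s ≤ Q) :
    ∀ t ≥ T, ∫ s in T..t, Real.exp (-(t - s)) * h s ≤ 2 * Q + C :=
  exp_weighted_dissipation_bound_general T C Q hC y h hy hh hineq hbd
end
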